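/- Let Ψ : [0,1] → (0,∞) be continuously differentiable with Ψ(0) = 1 and Ψ'(0) = μ, and suppose λ·Ψ'(λ) − Ψ(λ)·log Ψ(λ) ≤ D·λ²·Ψ(λ) for all λ ∈ (0,1]. Then Ψ(λ) ≤ exp(μ·λ + D·λ²) for all λ ∈ [0,1]. -/

import Mathlib

/-!
Herbst's argument. With `f = log Ψ`, the hypothesis says `l f'(l) - f(l) ≤ D l²`, i.e. the derivative
of `f(l)/l - D l` is nonpositive on `(0, 1]`. Hence `f(l)/l - D l` is bounded by its limit at `0⁺`,
which is `f'(0) = μ` because `f(0) = 0`; multiplying by `l` and exponentiating gives the bound.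
-/

open Set Filter Topology

theorem antitoneOn_div_sub_mul_Ioc {f f' : ℝ → ℝ} {D b : ℝ}
    (hf : ∀ l ∈ Ioc 0 b, HasDerivAt f (f' l) l)
    (hineq : ∀ l ∈ Ioc 0 b, l * f' l - f l ≤ D * l ^ 2) :
    AntitoneOn (fun l => f l / l - D * l) (Ioc 0 b) := by
  have hderiv : ∀ l ∈ Ioc 0 b,
      HasDerivAt (fun l => f l / l - D * l) ((f' l * l - f l * 1) / l ^ 2 - D) l := fun l hl =>
    ((hf l hl).div (hasDerivAt_id l) hl.1.ne').sub ((hasDerivAt_id l).const_mul D |>.congr_deriv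
      (mul_one D))
  refine antitoneOn_of_hasDerivWithinAt_nonpos (convex_Ioc 0 b)
    (fun l hl => (hderiv l hl).continuousAt.continuousWithinAt)
    (fun l hl => (hderiv l (interior_subset hl)).hasDerivWithinAt) fun l hl => ?_
  rw [interior_Ioc] at hl
  have hl2 : 0 < l ^ 2 := pow_pos hl.1 2
  rw [sub_nonpos, div_le_iff₀ hl2]
  linarith [hineq l ⟨hl.1, hl.2.le⟩]

theorem tendsto_div_nhdsGT_zero_of_hasDerivAt {f : ℝ → ℝ} {f' : ℝ} (hf : HasDerivAt f f' 0)
    (hf0 : f 0 = 0) : Tendsto (fun l => f l / l) (𝓝[>] 0) (𝓝 f') := by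
  simpa [hf0, div_eq_inv_mul] using hf.tendsto_slope_zero_right

theorem le_mul_add_mul_sq_of_sub_le {f f' : ℝ → ℝ} {μ D b : ℝ}
    (hf0 : f 0 = 0) (hderiv0 : HasDerivAt f μ 0)
    (hf : ∀ l ∈ Ioc 0 b, HasDerivAt f (f' l) l)
    (hineq : ∀ l ∈ Ioc 0 b, l * f' l - f l ≤ D * l ^ 2) :
    ∀ l ∈ Icc 0 b, f l ≤ μ * l + D * l ^ 2 := by
  intro l ⟨hl0, hlb⟩
  rcases hl0.eq_or_lt with rfl | hl
  · simp [hf0]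
  have hlim : Tendsto (fun ε => f ε / ε - D * ε) (𝓝[>] 0) (𝓝 μ) := by
    simpa using (tendsto_div_nhdsGT_zero_of_hasDerivAt hderiv0 hf0).sub
      ((continuous_const_mul D).tendsto' 0 0 (mul_zero D) |>.mono_left nhdsWithin_le_nhds)
  have hbound : f l / l - D * l ≤ μ := by
    refine ge_of_tendsto hlim ?_
    filter_upwards [Ioo_mem_nhdsGT hl] with ε hε
    exact antitoneOn_div_sub_mul_Ioc hf hineq ⟨hε.1, hε.2.le.trans hlb⟩ ⟨hl, hlb⟩ hε.2.le
  have hdiv : f l / l ≤ μ + D * l := by linarith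
  rw [div_le_iff₀ hl] at hdiv
  linarith

theorem stmt_14_general (Ψ Ψ' : ℝ → ℝ) (μ D : ℝ)
    (hpos : ∀ l ∈ Set.Icc (0:ℝ) 1, 0 < Ψ l)
    (hderiv : ∀ l ∈ Set.Icc (0:ℝ) 1, HasDerivAt Ψ (Ψ' l) l)
    (h0 : Ψ 0 = 1) (h0' : Ψ' 0 = μ)
    (hineq : ∀ l ∈ Set.Ioc (0:ℝ) 1,
      l * Ψ' l - Ψ l * Real.log (Ψ l) ≤ D * l ^ 2 * Ψ l) :
    ∀ l ∈ Set.Icc (0:ℝ) 1, Ψ l ≤ Real.exp (μ * l + D * l ^ 2) := by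
  have hlog : ∀ l ∈ Icc (0:ℝ) 1, HasDerivAt (fun l => Real.log (Ψ l)) (Ψ' l / Ψ l) l :=
    fun l hl => (hderiv l hl).log (hpos l hl).ne'
  have hlog0 : HasDerivAt (fun l => Real.log (Ψ l)) μ 0 := by
    simpa [h0, h0'] using hlog 0 (left_mem_Icc.2 zero_le_one)
  have hlogineq : ∀ l ∈ Ioc (0:ℝ) 1, l * (Ψ' l / Ψ l) - Real.log (Ψ l) ≤ D * l ^ 2 := by
    intro l hl
    have hΨ := hpos l (Ioc_subset_Icc_self hl)
    rw [mul_div_assoc', div_sub' hΨ.ne', div_le_iff₀ hΨ]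
    linarith [hineq l hl]
  intro l hl
  rw [← Real.log_le_iff_le_exp (hpos l hl)]
  exact le_mul_add_mul_sq_of_sub_le (by simp [h0]) hlog0
    (fun l hl => hlog l (Ioc_subset_Icc_self hl)) hlogineq l hl

theorem stmt_14 (Ψ Ψ' : ℝ → ℝ) (μ D : ℝ)
    (hpos : ∀ l ∈ Set.Icc (0:ℝ) 1, 0 < Ψ l)
    (hderiv : ∀ l ∈ Set.Icc (0:ℝ) 1, HasDerivAt Ψ (Ψ' l) l)
    (hcont : ContinuousOn Ψ' (Set.Icc 0 1))
    (h0 : Ψ 0 = 1) (h0' : Ψ' 0 = μ)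
    (hineq : ∀ l ∈ Set.Ioc (0:ℝ) 1,
      l * Ψ' l - Ψ l * Real.log (Ψ l) ≤ D * l ^ 2 * Ψ l) :
    ∀ l ∈ Set.Icc (0:ℝ) 1, Ψ l ≤ Real.exp (μ * l + D * l ^ 2) :=
  stmt_14_general Ψ Ψ' μ D hpos hderiv h0 h0' hineq
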